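/- Let G be a broken wheel with principal path P = p p' p'' and let L be a list-assignment for G with |L(v)| ≥ 3 for every vertex v ∈ V(G) \ {p, p'}. Let q ∈ {p, p'} and let 𝓕 be a family of L-colorings of the edge pp' with |𝓕| ≥ 3 such that all elements of 𝓕 assign the same color to q. Then there exists φ ∈ 𝓕 with |Λ_G(φ(p), φ(p'), •)| ≥ 2. -/

import Mathlib

/-- Vertex type of a broken wheel whose hub-deleted path `p u₁ … u_t p''` has `t + 2`
vertices: `some i` is the `i`-th path vertex (so `some 0 = p` and
`some (Fin.last (t+1)) = p''`), and `none` is the hub `p'`. -/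
abbrev BWVert (t : ℕ) := Option (Fin (t + 2))

/-- Adjacency in the broken wheel: the hub `p'` is adjacent to every path vertex, and
two path vertices are adjacent exactly when they are consecutive. -/
def bwAdj (t : ℕ) : BWVert t → BWVert t → Prop
  | none, none => False
  | none, some _ => True
  | some _, none => True
  | some i, some j => i.val + 1 = j.val ∨ j.val + 1 = i.val

/-- An `L`-coloring of (all of) the broken wheel. -/
def IsBWColoring (t : ℕ) (L : BWVert t → Finset ℕ) (c : BWVert t → ℕ) : Prop :=
  (∀ v, c v ∈ L v) ∧ ∀ v w, bwAdj t v w → c v ≠ c w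

/-- `Λ_G(a, b, •)`: the set of colors `x` such that some `L`-coloring of the broken wheel
uses `a, b, x` on `p, p', p''` respectively. -/
def Lambda (t : ℕ) (L : BWVert t → Finset ℕ) (a b : ℕ) : Set ℕ :=
  {x | ∃ c : BWVert t → ℕ, IsBWColoring t L c ∧
    c (some 0) = a ∧ c none = b ∧ c (some (Fin.last (t + 1))) = x}

/-!
Fix `φ = (a, b)` and colour the path `p u₁ … u_t p''` from left to right, avoiding `b` on every
vertex. If at some vertex at least two colours are attainable, then every colour of the next
list other than `b` is attainable there (it differs from one of the two), so from then on at
least two colours stay attainable, up to `p''`. This is guaranteed once `L(u₁) \ {a, b}` has two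
colours. That can fail only if `L(u₁)` has exactly three colours, two of them `a` and `b`; since
the colourings in `𝓕` agree at `q` and are pairwise distinct, their other colours are three
distinct values, and they cannot all lie in the two-element set `L(u₁) \ {φ(q)}`.
-/

open Fin.NatCast

section PathColoring

variable {α : Type*} (M : ℕ → Finset α) (a : α)

def IsPathColoring (n : ℕ) (c : ℕ → α) : Prop :=
  c 0 = a ∧ (∀ j, 1 ≤ j → j ≤ n → c j ∈ M j) ∧ ∀ j < n, c j ≠ c (j + 1)

def pathReach (n : ℕ) : Set α :=
  {x | ∃ c, IsPathColoring M a n c ∧ c n = x}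

variable {M a}

lemma self_mem_pathReach_zero : a ∈ pathReach M a 0 :=
  ⟨fun _ => a, ⟨rfl, fun _ h₁ h₀ => absurd h₀ (by omega), fun _ h => absurd h (by omega)⟩, rfl⟩

lemma mem_pathReach_succ {n : ℕ} {x y : α} (hy : y ∈ pathReach M a n) (hx : x ∈ M (n + 1))
    (hyx : y ≠ x) : x ∈ pathReach M a (n + 1) := by
  obtain ⟨c, ⟨hc0, hcM, hcne⟩, rfl⟩ := hy
  refine ⟨Function.update c (n + 1) x, ⟨?_, fun j h₁ hj => ?_, fun j hj => ?_⟩,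
    Function.update_self ..⟩
  · rwa [Function.update_of_ne (by omega)]
  · rcases (show j ≤ n ∨ j = n + 1 by omega) with hj | rfl
    · rw [Function.update_of_ne (by omega)]
      exact hcM j h₁ hj
    · rwa [Function.update_self]
  · rcases (show j < n ∨ j = n by omega) with hj | rfl
    · rw [Function.update_of_ne (by omega), Function.update_of_ne (by omega)]
      exact hcne j hj
    · rwa [Function.update_of_ne (by omega), Function.update_self]

lemma coe_subset_pathReach_succ {n : ℕ} (h : (pathReach M a n).Nontrivial) :
    ↑(M (n + 1)) ⊆ pathReach M a (n + 1) := fun x hx =>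
  let ⟨_, hy, hyx⟩ := h.exists_ne x
  mem_pathReach_succ hy hx hyx

lemma pathReach_nontrivial [DecidableEq α] (h₁ : 1 < ((M 1).erase a).card)
    {n : ℕ} (hM : ∀ j, 2 ≤ j → j ≤ n → 1 < (M j).card) (hn : 1 ≤ n) :
    (pathReach M a n).Nontrivial := by
  induction n, hn using Nat.le_induction with
  | base =>
    refine (Finset.one_lt_card_iff_nontrivial.mp h₁).mono fun x hx => ?_
    obtain ⟨hxa, hx⟩ := Finset.mem_erase.mp hx
    exact mem_pathReach_succ self_mem_pathReach_zero hx (Ne.symm hxa)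
  | succ n hn ih =>
    exact (Finset.one_lt_card_iff_nontrivial.mp (hM (n + 1) (by omega) le_rfl)).mono
      (coe_subset_pathReach_succ (ih fun j hj₂ hj => hM j hj₂ (by omega)))

end PathColoring

section Erase

variable {α ι : Type*} [DecidableEq α] {S : Finset α}

lemma exists_one_lt_card_erase_erase (hS : 3 ≤ S.card) (c : α) {F : Finset ι} {f : ι → α}
    (hf : Set.InjOn f F) (hF : 3 ≤ F.card) : ∃ i ∈ F, 1 < ((S.erase c).erase (f i)).card := by
  have hT := Finset.pred_card_le_card_erase (s := S) (a := c)
  by_cases hsub : F.image f ⊆ S.erase c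
  · have hFT := Finset.card_le_card hsub
    rw [Finset.card_image_of_injOn hf] at hFT
    obtain ⟨i, hi⟩ := Finset.card_pos.mp (by omega : 0 < F.card)
    have := Finset.pred_card_le_card_erase (s := S.erase c) (a := f i)
    exact ⟨i, hi, by omega⟩
  · obtain ⟨_, hx, hxT⟩ := Finset.not_subset.mp hsub
    obtain ⟨i, hi, rfl⟩ := Finset.mem_image.mp hx
    exact ⟨i, hi, by rw [Finset.erase_eq_of_notMem hxT]; omega⟩

lemma exists_mem_one_lt_card_erase_erase (hS : 3 ≤ S.card) {F : Finset (α × α)}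
    (hF : 3 ≤ F.card)
    (hconst : (∀ φ ∈ F, ∀ φ' ∈ F, φ.1 = φ'.1) ∨ (∀ φ ∈ F, ∀ φ' ∈ F, φ.2 = φ'.2)) :
    ∃ φ ∈ F, 1 < ((S.erase φ.1).erase φ.2).card := by
  obtain ⟨φ₀, hφ₀⟩ := Finset.card_pos.mp (by omega : 0 < F.card)
  rcases hconst with hc | hc
  · obtain ⟨φ, hφ, h⟩ := exists_one_lt_card_erase_erase hS φ₀.1 (f := Prod.snd)
      (fun φ hφ φ' hφ' h => Prod.ext (hc φ hφ φ' hφ') h) hF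
    exact ⟨φ, hφ, hc φ₀ hφ₀ φ hφ ▸ h⟩
  · obtain ⟨φ, hφ, h⟩ := exists_one_lt_card_erase_erase hS φ₀.2 (f := Prod.fst)
      (fun φ hφ φ' hφ' h => Prod.ext h (hc φ hφ φ' hφ')) hF
    rw [hc φ₀ hφ₀ φ hφ, Finset.erase_right_comm] at h
    exact ⟨φ, hφ, h⟩

end Erase

section BrokenWheel

variable (t : ℕ) (L : BWVert t → Finset ℕ)

/-- The cast `j : Fin (t + 2)` wraps around, so only `j ≤ t + 1` is meaningful. -/
def pathLists (b : ℕ) (j : ℕ) : Finset ℕ :=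
  (L (some (j : Fin (t + 2)))).erase b

variable {t L}

lemma pathReach_subset_lambda {a b : ℕ} (ha : a ∈ L (some 0)) (hb : b ∈ L none) (hab : a ≠ b) :
    pathReach (pathLists t L b) a (t + 1) ⊆ Lambda t L a b := by
  rintro x ⟨c, ⟨hc0, hcM, hcne⟩, rfl⟩
  have hpath : ∀ i : Fin (t + 2), c i ∈ L (some i) ∧ c i ≠ b := by
    intro i
    rcases Nat.eq_zero_or_pos i.val with h0 | hpos
    · rw [h0, hc0]
      exact ⟨Fin.val_eq_zero_iff.mp h0 ▸ ha, hab⟩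
    · have := hcM i hpos (by omega)
      rw [pathLists, Fin.cast_val_eq_self, Finset.mem_erase] at this
      exact ⟨this.2, this.1⟩
  refine ⟨fun v => v.elim b (fun i => c i), ⟨?_, ?_⟩, hc0, rfl, rfl⟩
  · rintro (_ | i)
    exacts [hb, (hpath i).1]
  · rintro (_ | i) (_ | j) hadj
    · exact hadj.elim
    · exact (hpath j).2.symm
    · exact (hpath i).2
    · rcases hadj with h | h
      · simpa only [Option.elim, ← h] using hcne i (by omega)
      · simpa only [Option.elim, ← h] using (hcne j (by omega)).symm

lemma one_lt_card_pathLists (hL : ∀ v : BWVert t, v ≠ some 0 → v ≠ none → 3 ≤ (L v).card)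
    (b : ℕ) {j : ℕ} (hj₁ : 1 ≤ j) (hj : j ≤ t + 1) : 1 < (pathLists t L b j).card := by
  have h3 : 3 ≤ (L (some (j : Fin (t + 2)))).card := by
    refine hL _ (fun h => ?_) (Option.some_ne_none _)
    have := congrArg Fin.val (Option.some_injective _ h)
    rw [Fin.val_cast_of_lt (by omega), Fin.val_zero] at this
    omega
  have := Finset.pred_card_le_card_erase (s := L (some (j : Fin (t + 2)))) (a := b)
  rw [pathLists]
  omega

lemma two_le_ncard_lambda (hL : ∀ v : BWVert t, v ≠ some 0 → v ≠ none → 3 ≤ (L v).card)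
    {a b : ℕ} (ha : a ∈ L (some 0)) (hb : b ∈ L none) (hab : a ≠ b)
    (h₁ : 1 < (((L (some 1)).erase a).erase b).card) : 2 ≤ (Lambda t L a b).ncard := by
  have hfin : Finite (Lambda t L a b) :=
    Set.Finite.subset (L (some (Fin.last (t + 1)))).finite_toSet
      fun x ⟨c, hc, _, _, hx⟩ => hx ▸ hc.1 _
  have hreach : (pathReach (pathLists t L b) a (t + 1)).Nontrivial := by
    refine pathReach_nontrivial ?_ (fun j hj₂ hj => one_lt_card_pathLists hL b (by omega) hj)
      (by omega)
    rwa [pathLists, Nat.cast_one, Finset.erase_right_comm]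
  exact Set.one_lt_ncard_iff_nontrivial.mpr (hreach.mono (pathReach_subset_lambda ha hb hab))

end BrokenWheel

/-- Theorem 2.4(2): if `𝓕` is a family of at least three `L`-colorings of the edge `pp'`
all assigning the same color to a fixed `q ∈ {p, p'}`, then some `φ ∈ 𝓕` has
`|Λ_G(φ(p), φ(p'), •)| ≥ 2`. An element `φ ∈ 𝓕` is recorded as the pair
`(φ(p), φ(p'))`. -/
theorem bwheel_family_two_lambda (t : ℕ) (L : BWVert t → Finset ℕ)
    (hL : ∀ v : BWVert t, v ≠ some 0 → v ≠ none → 3 ≤ (L v).card)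
    (F : Finset (ℕ × ℕ))
    (hF : ∀ φ ∈ F, φ.1 ∈ L (some 0) ∧ φ.2 ∈ L none ∧ φ.1 ≠ φ.2)
    (hcard : 3 ≤ F.card)
    (hconst : (∀ φ ∈ F, ∀ φ' ∈ F, φ.1 = φ'.1) ∨ (∀ φ ∈ F, ∀ φ' ∈ F, φ.2 = φ'.2)) :
    ∃ φ ∈ F, 2 ≤ (Lambda t L φ.1 φ.2).ncard := by
  obtain ⟨φ, hφ, hS⟩ :=
    exists_mem_one_lt_card_erase_erase (hL (some 1) (by simp) (by simp)) hcard hconst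
  obtain ⟨ha, hb, hab⟩ := hF φ hφ
  exact ⟨φ, hφ, two_le_ncard_lambda hL ha hb hab hS⟩
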